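/- arXiv:2502.07290 — 2 statements merged into one kernel-verified Lean document; each statement's English description precedes it below -/
import Mathlib

section
/- Let 0 < α ≤ 1, let z be a real number with z > 1, regarded as a complex number, and let ω = exp(2πi/3) ∈ ℂ. Then ∑_{n=0}^{∞} Γ(3n+α)/(Γ(α)·Γ(3n+1))·z^{−n} = (1/3)·((1−z^{−1/3})^{−α} + (1−ω·z^{−1/3})^{−α} + (1−ω²·z^{−1/3})^{−α}), where z^{−1/3} is the real power of z and the complex powers (·)^{−α} are principal-branch complex powers; in particular the right-hand side is real. -/
/-!
The coefficients `Γ(n+α)/(Γ(α)Γ(n+1))` are the generalized binomial coefficients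
`choose (α+n-1) n`, hence the Taylor coefficients of `(1-x)^(-α)` on the unit disc.
Averaging this series over `x = ωʲ z^(-1/3)`, `j = 0, 1, 2`, keeps exactly the terms whose index
is a multiple of `3`, because `1 + ωⁿ + ω²ⁿ` is `3` or `0` according as `3` divides `n` or not.
-/

open Complex Finset

theorem Real.Gamma_add_nat_div_Gamma {x : ℝ} (hx : 0 < x) (n : ℕ) :
    Real.Gamma (x + n) / Real.Gamma x = (ascPochhammer ℝ n).eval x := by
  induction n with
  | zero => simp [(Real.Gamma_pos_of_pos hx).ne']
  | succ n ih =>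
    rw [ascPochhammer_succ_eval, ← ih, Nat.cast_succ, ← add_assoc,
      Real.Gamma_add_one (by positivity)]
    ring

theorem Real.Gamma_add_div_Gamma_mul_Gamma_eq_choose {α : ℝ} (hα : 0 < α) (n : ℕ) :
    Real.Gamma (n + α) / (Real.Gamma α * Real.Gamma (n + 1)) = Ring.choose (α + n - 1) n := by
  rw [Ring.choose_eq_smul, Polynomial.descPochhammer_smeval_eq_ascPochhammer,
    Polynomial.ascPochhammer_smeval_eq_eval, show α + n - 1 - n + 1 = α by ring,
    ← Real.Gamma_add_nat_div_Gamma hα, Real.Gamma_nat_eq_factorial, smul_eq_mul, add_comm]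
  field_simp

theorem Complex.hasSum_choose_mul_pow {x : ℂ} (hx : ‖x‖ < 1) (a : ℂ) :
    HasSum (fun n : ℕ ↦ Ring.choose (a + n - 1) n * x ^ n) ((1 - x) ^ (-a)) := by
  have := (one_div_one_sub_cpow_hasFPowerSeriesOnBall_zero a).hasSum
    (y := x) (by simpa [← ofReal_norm] using hx)
  simpa [FormalMultilinearSeries.ofScalars_apply_eq, cpow_neg, mul_comm] using this

namespace IsPrimitiveRoot

variable {K : Type*} {ζ : K} {k : ℕ}

theorem geom_sum_pow_eq_ite [CommRing K] [IsDomain K] (hζ : IsPrimitiveRoot ζ k) (n : ℕ) :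
    ∑ j ∈ range k, (ζ ^ n) ^ j = if k ∣ n then (k : K) else 0 := by
  split_ifs with hkn
  · simp [(hζ.pow_eq_one_iff_dvd n).mpr hkn]
  · have hne : ζ ^ n - 1 ≠ 0 := sub_ne_zero.mpr fun h ↦ hkn ((hζ.pow_eq_one_iff_dvd n).mp h)
    have hroot : (ζ ^ n) ^ k = 1 := by rw [← pow_mul, mul_comm, pow_mul, hζ.pow_eq_one, one_pow]
    have := geom_sum_mul (ζ ^ n) k
    rw [hroot, sub_self] at this
    exact (mul_eq_zero.mp this).resolve_right hne

theorem hasSum_multisection [Field K] [TopologicalSpace K] [IsTopologicalRing K] [NeZero k]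
    (hζ : IsPrimitiveRoot ζ k) {a s : ℕ → K}
    (h : ∀ j ∈ range k, HasSum (fun n ↦ (ζ ^ j) ^ n * a n) (s j)) :
    HasSum (fun n ↦ a (k * n)) ((k : K)⁻¹ * ∑ j ∈ range k, s j) := by
  have hk : (k : K) ≠ 0 := hζ.neZero'.out
  have hsum : HasSum (fun n ↦ (if k ∣ n then (k : K) else 0) * a n) (∑ j ∈ range k, s j) := by
    convert hasSum_sum h using 2 with n
    rw [← hζ.geom_sum_pow_eq_ite, sum_mul]
    simp_rw [← pow_mul, mul_comm]
  have hmul : HasSum (fun n ↦ (k : K) * a (k * n)) (∑ j ∈ range k, s j) := by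
    rw [← (mul_right_injective₀ (NeZero.ne k)).hasSum_iff] at hsum
    · simpa [Function.comp_def] using hsum
    · rintro n hn
      rw [if_neg fun ⟨m, hm⟩ ↦ hn ⟨m, hm.symm⟩, zero_mul]
  simpa [inv_mul_cancel_left₀ hk] using hmul.mul_left (k : K)⁻¹

end IsPrimitiveRoot

theorem ztransform_phi_mod3_0_general (α : ℝ) (hα : 0 < α) (z : ℝ) (hz : 1 < z)
    (ω : ℂ) (hω : ω = Complex.exp (2 * (Real.pi : ℂ) * Complex.I / 3)) :
    HasSum (fun n : ℕ =>
        ((Real.Gamma (3 * (n : ℝ) + α) /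
            (Real.Gamma α * Real.Gamma (3 * (n : ℝ) + 1)) * z ^ (-(n : ℝ)) : ℝ) : ℂ))
      ((1 / 3 : ℂ) *
        ((1 - ((z ^ (-(1 / 3 : ℝ)) : ℝ) : ℂ)) ^ ((-α : ℝ) : ℂ)
          + (1 - ω * ((z ^ (-(1 / 3 : ℝ)) : ℝ) : ℂ)) ^ ((-α : ℝ) : ℂ)
          + (1 - ω ^ 2 * ((z ^ (-(1 / 3 : ℝ)) : ℝ) : ℂ)) ^ ((-α : ℝ) : ℂ))) := by
  set q : ℝ := z ^ (-(1 / 3 : ℝ))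
  have hz0 : 0 < z := one_pos.trans hz
  have hq_norm : ‖(q : ℂ)‖ < 1 := by
    rw [norm_real, Real.norm_of_nonneg (Real.rpow_nonneg hz0.le _)]
    exact Real.rpow_lt_one_of_one_lt_of_neg hz (by norm_num)
  have hq_pow (n : ℕ) : q ^ (3 * n) = z ^ (-(n : ℝ)) := by
    rw [← Real.rpow_natCast, ← Real.rpow_mul hz0.le]
    congr 1
    push_cast
    ring
  have hω3 : IsPrimitiveRoot ω 3 := by
    simpa [hω] using Complex.isPrimitiveRoot_exp 3 (by norm_num)
  have hseries := hω3.hasSum_multisection (a := fun n ↦ Ring.choose ((α : ℂ) + n - 1) n * q ^ n)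
    (s := fun j ↦ (1 - ω ^ j * q) ^ (-(α : ℂ))) fun j _ ↦ by
      have hx : ‖ω ^ j * q‖ < 1 := by rwa [norm_mul, norm_pow, hω3.norm'_eq_one (by norm_num),
        one_pow, one_mul]
      simpa only [mul_pow, mul_left_comm] using hasSum_choose_mul_pow hx α
  rw [show (1 / 3 : ℂ) * _ = ((3 : ℕ) : ℂ)⁻¹ * ∑ j ∈ range 3, (1 - ω ^ j * q) ^ (-(α : ℂ)) by
    simp only [sum_range_succ, sum_range_zero, zero_add, pow_zero, one_mul, pow_one]
    push_cast
    ring]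
  refine hseries.congr_fun fun n ↦ ?_
  rw [← hq_pow, show (3 : ℝ) * n = ((3 * n : ℕ) : ℝ) by push_cast; ring,
    Real.Gamma_add_div_Gamma_mul_Gamma_eq_choose hα]
  push_cast
  ring

/-- Z-transform of the subsequence `n ↦ φ̃_α(3n)` for `0 < α ≤ 1`, `z > 1`,
with `ω = exp(2πi/3)`:
`∑ₙ Γ(3n+α)/(Γ(α)·Γ(3n+1))·z^(-n)
  = (1/3)·((1-z^(-1/3))^(-α) + (1-ω·z^(-1/3))^(-α) + (1-ω²·z^(-1/3))^(-α))`,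
the sum of real terms being taken in `ℂ`, so in particular the RHS is real. -/
theorem ztransform_phi_mod3_0 (α : ℝ) (hα : 0 < α) (hα' : α ≤ 1) (z : ℝ) (hz : 1 < z)
    (ω : ℂ) (hω : ω = Complex.exp (2 * (Real.pi : ℂ) * Complex.I / 3)) :
    HasSum (fun n : ℕ =>
        ((Real.Gamma (3 * (n : ℝ) + α) /
            (Real.Gamma α * Real.Gamma (3 * (n : ℝ) + 1)) * z ^ (-(n : ℝ)) : ℝ) : ℂ))
      ((1 / 3 : ℂ) *
        ((1 - ((z ^ (-(1 / 3 : ℝ)) : ℝ) : ℂ)) ^ ((-α : ℝ) : ℂ)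
          + (1 - ω * ((z ^ (-(1 / 3 : ℝ)) : ℝ) : ℂ)) ^ ((-α : ℝ) : ℂ)
          + (1 - ω ^ 2 * ((z ^ (-(1 / 3 : ℝ)) : ℝ) : ℂ)) ^ ((-α : ℝ) : ℂ))) :=
  ztransform_phi_mod3_0_general α hα z hz ω hω
end

section
/- Let 0 < α ≤ 1, let z be a real number with z > 1, regarded as a complex number, and let ω = exp(2πi/3) ∈ ℂ. Then ∑_{n=0}^{∞} Γ(3n+4+α)/(Γ(α)·Γ(3n+5))·z^{−n} = (z^{4/3}/3)·((1−z^{−1/3})^{−α} + ω²·(1−ω·z^{−1/3})^{−α} + ω·(1−ω²·z^{−1/3})^{−α}) − z·α, where z^{4/3} and z^{−1/3} are real powers of z and the complex powers (·)^{−α} are principal-branch complex powers; in particular the right-hand side is real. -/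
/-!
The numbers `Γ(m+α)/(Γ(α)·m!)` are the coefficients of the binomial series
`(1-y)^(-α) = ∑ₘ Γ(m+α)/(Γ(α)·m!)·yᵐ`, `‖y‖ < 1`. Averaging this series at `y = ωʲx`
(`j = 0, 1, 2`) with weights `ω²ʲ` keeps exactly the terms with `m ≡ 1 (mod 3)`, by orthogonality
of the cube roots of unity. For `x = z^(-1/3)`, removing the term `m = 1`, which is `α·x`, and
multiplying by `z^(4/3) = x⁻⁴` turns `∑ₙ Γ(3n+4+α)/(Γ(α)·(3n+4)!)·x^(3n+4)` into the Z-transform.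
-/

open Finset

theorem Nat.dvd_add_sub_iff_mod_eq {k r : ℕ} (hr : r < k) (m : ℕ) :
    k ∣ m + (k - r) ↔ m % k = r := by
  have hk : r + (k - r) ≡ 0 [MOD k] := by
    rw [Nat.add_sub_cancel' hr.le]
    exact Nat.modEq_zero_iff_dvd.2 dvd_rfl
  have hr' : r % k = r := Nat.mod_eq_of_lt hr
  rw [← Nat.modEq_zero_iff_dvd]
  constructor
  · intro h
    rw [← hr']
    exact (h.trans hk.symm).add_right_cancel' _
  · intro h
    exact (Nat.ModEq.add_right _ (h.trans hr'.symm)).trans hk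

theorem IsPrimitiveRoot.sum_pow_mul_eq_ite {R : Type*} [CommRing R] [IsDomain R] {ζ : R} {k : ℕ}
    (hζ : IsPrimitiveRoot ζ k) (m : ℕ) :
    ∑ j ∈ range k, ζ ^ (j * m) = if k ∣ m then (k : R) else 0 := by
  simp_rw [mul_comm _ m, pow_mul]
  split_ifs with hkm
  · simp [(hζ.pow_eq_one_iff_dvd m).2 hkm]
  · have hne : ζ ^ m ≠ 1 := fun h => hkm ((hζ.pow_eq_one_iff_dvd m).1 h)
    refine (mul_eq_zero.1 ?_).resolve_right (sub_ne_zero.2 hne)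
    rw [geom_sum_mul, ← pow_mul, mul_comm, pow_mul, hζ.pow_eq_one, one_pow, sub_self]

theorem IsPrimitiveRoot.hasSum_mul_add_of_hasSum_pow_mul {K : Type*} [Field K] [CharZero K]
    [TopologicalSpace K] [IsTopologicalRing K] {ω : K} {k r : ℕ} (hω : IsPrimitiveRoot ω k)
    (hr : r < k) {f S : ℕ → K} (hS : ∀ j < k, HasSum (fun m => ω ^ (j * m) * f m) (S j)) :
    HasSum (fun n => f (k * n + r)) ((k : K)⁻¹ * ∑ j ∈ range k, ω ^ (j * (k - r)) * S j) := by
  have hk : (k : K) ≠ 0 := by exact_mod_cast (show k ≠ 0 by omega)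
  have hfilter : ∀ m, (k : K)⁻¹ * ∑ j ∈ range k, ω ^ (j * (k - r)) * (ω ^ (j * m) * f m)
      = if m % k = r then f m else 0 := by
    intro m
    simp_rw [← mul_assoc, ← pow_add, ← mul_add, ← sum_mul, hω.sum_pow_mul_eq_ite,
      add_comm (k - r), Nat.dvd_add_sub_iff_mod_eq hr]
    split_ifs <;> simp [hk]
  have hsum := (hasSum_sum fun j hj => (hS j (mem_range.1 hj)).mul_left (ω ^ (j * (k - r))))
    |>.mul_left (k : K)⁻¹
  simp_rw [hfilter] at hsum
  have hinj : Function.Injective (fun n => k * n + r) := fun a b h => by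
    simpa [show k ≠ 0 by omega] using h
  rw [← hinj.hasSum_iff fun m hm => if_neg fun h => hm ⟨m / k, by
    rw [← h]; exact Nat.div_add_mod m k⟩] at hsum
  simpa [Function.comp_def, Nat.mul_add_mod, Nat.mod_eq_of_lt hr] using hsum

theorem Complex.hasSum_multichoose_mul_pow (a : ℂ) {y : ℂ} (hy : ‖y‖ < 1) :
    HasSum (fun n => Ring.multichoose a n * y ^ n) ((1 - y) ^ (-a)) := by
  have hy' : y ∈ Metric.eball (0 : ℂ) 1 := by
    simpa [← ENNReal.ofReal_one, Metric.eball_ofReal] using hy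
  simpa [FormalMultilinearSeries.ofScalars_apply_eq, Ring.multichoose_eq, Complex.cpow_neg,
    mul_comm] using (Complex.one_div_one_sub_cpow_hasFPowerSeriesOnBall_zero a).hasSum hy'

theorem Real.Gamma_add_nat_div_eq_multichoose {α : ℝ} (hα : ∀ k : ℕ, α ≠ -k) (n : ℕ) :
    ((Real.Gamma (n + α) / (Real.Gamma α * Real.Gamma (n + 1)) : ℝ) : ℂ)
      = Ring.multichoose (α : ℂ) n := by
  have hpoch : Complex.Gamma (α + n) / Complex.Gamma α = (ascPochhammer ℂ n).eval (α : ℂ) :=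
    Complex.Gamma_add_nat_div_Gamma_eq _ fun k h => hα k (by exact_mod_cast h)
  have hfac : (n.factorial : ℂ) ≠ 0 := by exact_mod_cast n.factorial_ne_zero
  have hmul := Ring.factorial_nsmul_multichoose_eq_ascPochhammer (α : ℂ) n
  rw [Polynomial.ascPochhammer_smeval_cast, Polynomial.ascPochhammer_smeval_eq_eval, ← hpoch,
    nsmul_eq_mul] at hmul
  rw [eq_comm, ← mul_right_inj' hfac, hmul, Real.Gamma_nat_eq_factorial]
  simp only [Complex.ofReal_div, Complex.ofReal_mul, Complex.ofReal_natCast,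
    ← Complex.Gamma_ofReal, Complex.ofReal_add, add_comm (n : ℂ)]
  field_simp

theorem ztransform_phi_mod3_4_general (α : ℝ) (hα : 0 < α) (z : ℝ) (hz : 1 < z)
    (ω : ℂ) (hω : ω = Complex.exp (2 * (Real.pi : ℂ) * Complex.I / 3)) :
    HasSum (fun n : ℕ =>
        ((Real.Gamma (3 * (n : ℝ) + 4 + α) /
            (Real.Gamma α * Real.Gamma (3 * (n : ℝ) + 5)) * z ^ (-(n : ℝ)) : ℝ) : ℂ))
      ((((z ^ ((4 / 3 : ℝ)) : ℝ) : ℂ) / 3) *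
        ((1 - ((z ^ (-(1 / 3 : ℝ)) : ℝ) : ℂ)) ^ ((-α : ℝ) : ℂ)
          + ω ^ 2 * (1 - ω * ((z ^ (-(1 / 3 : ℝ)) : ℝ) : ℂ)) ^ ((-α : ℝ) : ℂ)
          + ω * (1 - ω ^ 2 * ((z ^ (-(1 / 3 : ℝ)) : ℝ) : ℂ)) ^ ((-α : ℝ) : ℂ))
        - (z : ℂ) * (α : ℂ)) := by
  have hz0 : 0 < z := one_pos.trans hz
  set x : ℝ := z ^ (-(1 / 3 : ℝ)) with hx
  have hx0 : 0 < x := Real.rpow_pos_of_pos hz0 _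
  have hx1 : x < 1 := Real.rpow_lt_one_of_one_lt_of_neg hz (by norm_num)
  have hω3 : IsPrimitiveRoot ω 3 :=
    hω ▸ by exact_mod_cast Complex.isPrimitiveRoot_exp 3 (by norm_num)
  have hbinom : ∀ j < 3, HasSum (fun m => ω ^ (j * m) * (Ring.multichoose (α : ℂ) m * (x : ℂ) ^ m))
      ((1 - ω ^ j * x) ^ (-(α : ℂ))) := by
    intro j _
    have hy : ‖ω ^ j * (x : ℂ)‖ < 1 := by
      rwa [norm_mul, norm_pow, hω3.norm'_eq_one (by norm_num), one_pow, one_mul,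
        Complex.norm_real, Real.norm_of_nonneg hx0.le]
    convert Complex.hasSum_multichoose_mul_pow _ hy using 2 with m
    rw [mul_pow, pow_mul]
    ring
  have hshift := (hasSum_nat_add_iff' 1).2
    (hω3.hasSum_mul_add_of_hasSum_pow_mul (r := 1) (by norm_num) hbinom)
  convert hshift.mul_left ((z ^ (4 / 3 : ℝ) : ℝ) : ℂ) using 1
  · rfl
  · funext n
    have hcoef : ((Real.Gamma (3 * (n : ℝ) + 4 + α) /
        (Real.Gamma α * Real.Gamma (3 * (n : ℝ) + 5)) : ℝ) : ℂ)
          = Ring.multichoose (α : ℂ) (3 * (n + 1) + 1) := by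
      rw [← Real.Gamma_add_nat_div_eq_multichoose fun k h => by linarith [k.cast_nonneg (α := ℝ)]]
      push_cast
      ring_nf
    have hpow : z ^ (4 / 3 : ℝ) * x ^ (3 * (n + 1) + 1) = z ^ (-(n : ℝ)) := by
      rw [hx, ← Real.rpow_natCast, ← Real.rpow_mul hz0.le, ← Real.rpow_add hz0]
      congr 1
      push_cast
      ring
    rw [Complex.ofReal_mul, hcoef, ← hpow]
    push_cast
    ring
  · have hzx : ((z ^ (4 / 3 : ℝ) : ℝ) : ℂ) * x = z := by
      rw [← Complex.ofReal_mul, hx, ← Real.rpow_add hz0]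
      norm_num
    have hω4 : ω ^ 4 = ω := by rw [pow_succ, hω3.pow_eq_one, one_mul]
    simp only [Finset.sum_range_succ, Finset.sum_range_zero]
    norm_num [hω4]
    linear_combination (α : ℂ) * hzx

/-- Z-transform of the subsequence `n ↦ φ̃_α(3n+4)` for `0 < α ≤ 1`, `z > 1`,
with `ω = exp(2πi/3)`:
`∑ₙ Γ(3n+4+α)/(Γ(α)·Γ(3n+5))·z^(-n)
  = (z^(4/3)/3)·((1-z^(-1/3))^(-α) + ω²·(1-ω·z^(-1/3))^(-α) + ω·(1-ω²·z^(-1/3))^(-α)) - z·α`,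
the sum of real terms being taken in `ℂ`, so in particular the RHS is real. -/
theorem ztransform_phi_mod3_4 (α : ℝ) (hα : 0 < α) (hα' : α ≤ 1) (z : ℝ) (hz : 1 < z)
    (ω : ℂ) (hω : ω = Complex.exp (2 * (Real.pi : ℂ) * Complex.I / 3)) :
    HasSum (fun n : ℕ =>
        ((Real.Gamma (3 * (n : ℝ) + 4 + α) /
            (Real.Gamma α * Real.Gamma (3 * (n : ℝ) + 5)) * z ^ (-(n : ℝ)) : ℝ) : ℂ))
      ((((z ^ ((4 / 3 : ℝ)) : ℝ) : ℂ) / 3) *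
        ((1 - ((z ^ (-(1 / 3 : ℝ)) : ℝ) : ℂ)) ^ ((-α : ℝ) : ℂ)
          + ω ^ 2 * (1 - ω * ((z ^ (-(1 / 3 : ℝ)) : ℝ) : ℂ)) ^ ((-α : ℝ) : ℂ)
          + ω * (1 - ω ^ 2 * ((z ^ (-(1 / 3 : ℝ)) : ℝ) : ℂ)) ^ ((-α : ℝ) : ℂ))
        - (z : ℂ) * (α : ℂ)) :=
  ztransform_phi_mod3_4_general α hα z hz ω hω
end
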